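/- Let (T, ∧, 𝕀) and (T′, ∧′, 𝕀′) be two monogenic monoidal triangulated categories. Let F : T → T′ be a lax monoidal triangulated functor that preserves arbitrary coproducts, with unit morphism η : 𝕀′ → F(𝕀) and structure maps φ_{A,B} : F(A) ∧′ F(B) → F(A ∧ B) natural in A and B and compatible with the shift in each variable. If η is an isomorphism and φ_{𝕀,𝕀} : F(𝕀) ∧′ F(𝕀) → F(𝕀 ∧ 𝕀) is an isomorphism, then φ_{A,B} is an isomorphism for all objects A and B; that is, F is strong monoidal. -/

import Mathlib

/-!
STATEMENT 0: Let `(T, ∧, 𝕀)` and `(T′, ∧′, 𝕀′)` be two monogenic monoidal triangulated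
categories and let `F : T → T′` be a lax monoidal triangulated functor preserving arbitrary
coproducts, with unit morphism `η : 𝕀′ → F 𝕀` and structure maps
`φ A B : F A ∧′ F B ⟶ F (A ∧ B)` natural in both variables and compatible with the shift in
each variable.  If `η` and `φ 𝕀 𝕀` are isomorphisms, then every `φ A B` is an isomorphism,
i.e. `F` is strong monoidal.
-/

open CategoryTheory Category Limits Pretriangulated MonoidalCategory

universe v u

namespace Paper

variable {C : Type u} [Category.{v} C]

/-- The canonical map `⊕ᵢ Hom(G, Aᵢ) →+ Hom(G, ∐ᵢ Aᵢ)`. -/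
noncomputable def coproductComparison [Preadditive C] (G : C) {ι : Type v} (A : ι → C)
    [HasCoproduct A] : DirectSum ι (fun i => G ⟶ A i) →+ (G ⟶ ∐ A) :=
  letI := Classical.decEq ι
  DirectSum.toAddMonoid fun i =>
    AddMonoidHom.mk' (fun g => g ≫ Sigma.ι A i) fun _ _ => Preadditive.add_comp _ _ _ _ _ _

/-- An object `G` is small if for every family of objects admitting a coproduct, the
canonical map `⊕ᵢ Hom(G, Aᵢ) → Hom(G, ∐ᵢ Aᵢ)` is an isomorphism (bijective). -/
def IsSmallObject [Preadditive C] (G : C) : Prop :=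
  ∀ ⦃ι : Type v⦄ (A : ι → C) [HasCoproduct A], Function.Bijective (coproductComparison G A)

/-- An object `G` is a weak generator if a map `f : X ⟶ Y` is an isomorphism exactly when
`Hom(G⟦n⟧, X) → Hom(G⟦n⟧, Y)` is bijective for all integers `n`. -/
def IsWeakGenerator [HasShift C ℤ] (G : C) : Prop :=
  ∀ ⦃X Y : C⦄ (f : X ⟶ Y),
    IsIso f ↔ ∀ n : ℤ, Function.Bijective fun g : G⟦n⟧ ⟶ X => g ≫ f

end Paper

open Paper

/-!
For a fixed object `A`, the maps `φ A B` are the components of a natural transformation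
`F A ∧′ F(-) ⟶ F(A ∧ -)` between coproduct-preserving triangulated functors which commutes with
the shift, so the objects `B` at which it is invertible form a localizing subcategory of `T`.
It contains `𝕀`: once `η` is invertible, the right unit axiom writes `φ A 𝕀` as a composite of
isomorphisms.

A localizing subcategory containing a small weak generator `G` is everything. Indeed, every `X`
is the homotopy colimit (the cone of `1 - shift` on `∐ Xᵢ`) of a cellular tower `X₀ → X₁ → ⋯`
over `X`: `X₀` is a coproduct of shifts of `G` mapping onto every `Hom(G⟦n⟧, X)`, and `Xᵢ₊₁` is
the cone of a coproduct of shifts of `G` killing the kernel of `Hom(G⟦n⟧, Xᵢ) → Hom(G⟦n⟧, X)`.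
Smallness of the shifts of `G` identifies `Hom(G⟦n⟧, hocolim Xᵢ)` with
`colim Hom(G⟦n⟧, Xᵢ) = Hom(G⟦n⟧, X)`, and `G` detects isomorphisms.
-/

namespace Paper

section IsoLocus

variable {C D : Type*} [Category C] [Category D] {F₁ F₂ : C ⥤ D} (τ : F₁ ⟶ F₂)

def isoLocus : ObjectProperty C := fun X => IsIso (τ.app X)

instance : (isoLocus τ).IsClosedUnderIsomorphisms :=
  ⟨fun e h => (NatTrans.isIso_app_iff_of_iso τ e).1 h⟩

instance [HasShift C ℤ] [HasShift D ℤ] [F₁.CommShift ℤ] [F₂.CommShift ℤ]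
    [NatTrans.CommShift τ ℤ] : (isoLocus τ).IsStableUnderShift ℤ where
  isStableUnderShiftBy n := ⟨fun X (_ : IsIso (τ.app X)) => by
    change IsIso (τ.app (X⟦n⟧))
    rw [NatTrans.app_shift τ n X]
    infer_instance⟩

instance (J : Type*) [Category J] [PreservesColimitsOfShape J F₁]
    [PreservesColimitsOfShape J F₂] : (isoLocus τ).IsClosedUnderColimitsOfShape J where
  colimitsOfShape_le := by
    rintro X ⟨p⟩
    have : ∀ j, IsIso ((Functor.whiskerLeft p.diag τ).app j) := p.prop_diag_obj
    have : IsIso (Functor.whiskerLeft p.diag τ) := NatIso.isIso_of_isIso_app _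
    exact isIso_app_coconePt_of_preservesColimit p.diag τ _ p.isColimit

instance [HasZeroObject C] [HasShift C ℤ] [Preadditive C] [∀ n : ℤ, (shiftFunctor C n).Additive]
    [Pretriangulated C] [HasZeroObject D] [HasShift D ℤ] [Preadditive D]
    [∀ n : ℤ, (shiftFunctor D n).Additive] [Pretriangulated D] [F₁.CommShift ℤ] [F₂.CommShift ℤ]
    [F₁.IsTriangulated] [F₂.IsTriangulated] [NatTrans.CommShift τ ℤ] :
    (isoLocus τ).IsTriangulatedClosed₃ where
  ext₃' T hT h₁ h₂ := by
    have comm₃ : (F₁.map T.mor₃ ≫ (F₁.commShiftIso (1 : ℤ)).hom.app T.obj₁) ≫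
        (τ.app T.obj₁)⟦1⟧' =
          τ.app T.obj₃ ≫ F₂.map T.mor₃ ≫ (F₂.commShiftIso (1 : ℤ)).hom.app T.obj₁ := by
      rw [assoc, NatTrans.shift_app_comm, τ.naturality_assoc]
    let ψ : F₁.mapTriangle.obj T ⟶ F₂.mapTriangle.obj T :=
      Triangle.homMk _ _ (τ.app _) (τ.app _) (τ.app _) (τ.naturality T.mor₁)
        (τ.naturality T.mor₂) comm₃
    exact ObjectProperty.le_isoClosure _ _ (isIso₃_of_isIso₁₂ ψ (F₁.map_distinguished T hT)
      (F₂.map_distinguished T hT) h₁ h₂)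

end IsoLocus

variable {C : Type u} [Category.{v} C]

@[simp]
lemma coproductComparison_of [Preadditive C] (K : C) {ι : Type v} (A : ι → C) [HasCoproduct A]
    [DecidableEq ι] (i : ι) (g : K ⟶ A i) :
    coproductComparison K A (DirectSum.of _ i g) = g ≫ Sigma.ι A i :=
  DirectSum.toAddMonoid_of
    (fun i => AddMonoidHom.mk' (fun g => g ≫ Sigma.ι A i) fun _ _ => Preadditive.add_comp ..) i g

lemma IsSmallObject.map_equivalence [Preadditive C] [HasCoproducts.{v} C] {D : Type*}
    [Category.{v} D] [Preadditive D] (E : C ≌ D) [E.functor.Additive] {K : C}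
    (hK : IsSmallObject K) : IsSmallObject (E.functor.obj K) := by
  intro ι A _
  classical
  let c : (∐ fun i => E.inverse.obj (A i)) ≅ E.inverse.obj (∐ A) :=
    asIso (sigmaComparison E.inverse A)
  let e : DirectSum ι (fun i => K ⟶ E.inverse.obj (A i)) ≃+
      DirectSum ι (fun i => E.functor.obj K ⟶ A i) :=
    DFinsupp.mapRange.addEquiv fun i => (E.toAdjunction.homAddEquiv _ _).symm
  let e' : (K ⟶ ∐ fun i => E.inverse.obj (A i)) ≃+ (E.functor.obj K ⟶ ∐ A) :=
    (AddEquiv.mk' c.homToEquiv fun _ _ => Preadditive.add_comp ..).trans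
      (E.toAdjunction.homAddEquiv _ _).symm
  have hcomm : (coproductComparison (E.functor.obj K) A).comp e.toAddMonoidHom =
      e'.toAddMonoidHom.comp (coproductComparison K fun i => E.inverse.obj (A i)) := by
    refine DirectSum.addHom_ext fun i g => ?_
    have he :
        e (DirectSum.of _ i g) = DirectSum.of _ i ((E.toAdjunction.homEquiv _ _).symm g) :=
      DFinsupp.mapRange_single (hf := fun _ => map_zero _)
    simp [he, e', c, Iso.homToEquiv, AddEquiv.mk', ← Adjunction.homEquiv_naturality_right_symm]
  have hcomm' : coproductComparison (E.functor.obj K) A ∘ e = e' ∘ coproductComparison K _ :=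
    congrArg DFunLike.coe hcomm
  rw [← Function.Bijective.of_comp_iff _ e.bijective, hcomm']
  exact e'.bijective.comp (hK _)

lemma IsSmallObject.shift [Preadditive C] [HasShift C ℤ] [∀ n : ℤ, (shiftFunctor C n).Additive]
    [HasCoproducts.{v} C] {K : C} (hK : IsSmallObject K) (n : ℤ) : IsSmallObject (K⟦n⟧) :=
  have : (shiftEquiv C n).functor.Additive := inferInstanceAs (shiftFunctor C n).Additive
  hK.map_equivalence (shiftEquiv C n)

lemma eq_zero_of_comp_shift_map_eq_zero [Preadditive C] [HasShift C ℤ]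
    [∀ n : ℤ, (shiftFunctor C n).Additive] {K B B' : C} (u : B ⟶ B') (a : ℤ)
    (hu : ∀ x : K⟦-a⟧ ⟶ B, x ≫ u = 0 → x = 0) (z : K ⟶ B⟦a⟧) (hz : z ≫ u⟦a⟧' = 0) : z = 0 := by
  let e := shiftFunctorCompIsoId C a (-a) (add_neg_cancel a)
  have hnat : u⟦a⟧'⟦-a⟧' ≫ e.hom.app B' = e.hom.app B ≫ u := e.hom.naturality u
  have h : z⟦-a⟧' ≫ e.hom.app B = 0 :=
    hu _ (by rw [assoc, ← hnat, ← Functor.map_comp_assoc, hz, Functor.map_zero, zero_comp])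
  exact (Functor.map_eq_zero_iff _).1 (by simpa using h)

section HomSumShift

variable [Preadditive C] (X : ℕ → C) (f : ∀ i, X i ⟶ X (i + 1)) (K : C)

noncomputable def homSumShift :
    (DirectSum (ULift.{v} ℕ) fun i => K ⟶ X i.down) →+
      DirectSum (ULift.{v} ℕ) fun i => K ⟶ X i.down :=
  DirectSum.toAddMonoid fun i =>
    (DirectSum.of _ ⟨i.down + 1⟩).comp (Preadditive.rightComp K (f i.down))

lemma homSumShift_of (i : ℕ) (g : K ⟶ X i) :
    homSumShift X f K (DirectSum.of (fun i : ULift.{v} ℕ => K ⟶ X i.down) ⟨i⟩ g) =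
      DirectSum.of (fun i : ULift.{v} ℕ => K ⟶ X i.down) ⟨i + 1⟩ (g ≫ f i) :=
  DirectSum.toAddMonoid_of _ _ _

lemma homSumShift_apply_zero (d : DirectSum (ULift.{v} ℕ) fun i => K ⟶ X i.down) :
    homSumShift X f K d ⟨0⟩ = 0 := by
  induction d using DirectSum.induction_on with
  | zero => simp
  | of i g =>
    obtain ⟨i⟩ := i
    simp [homSumShift_of, DirectSum.of_apply]
  | add d d' hd hd' => simp [hd, hd']

lemma homSumShift_apply_succ (d : DirectSum (ULift.{v} ℕ) fun i => K ⟶ X i.down) (j : ℕ) :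
    homSumShift X f K d ⟨j + 1⟩ = d ⟨j⟩ ≫ f j := by
  induction d using DirectSum.induction_on with
  | zero => simp
  | of i g =>
    obtain ⟨i⟩ := i
    by_cases h : i = j
    · subst h; simp [homSumShift_of]
    · simp [homSumShift_of, DirectSum.of_apply, h]
  | add d d' hd hd' => simp [hd, hd', Preadditive.add_comp]

end HomSumShift

section Telescope

variable [HasCoproducts.{v} C] (X : ℕ → C) (f : ∀ i, X i ⟶ X (i + 1))

noncomputable abbrev telescope : C := ∐ fun i : ULift.{v} ℕ => X i.down

noncomputable abbrev telescopeι (i : ℕ) : X i ⟶ telescope X :=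
  Sigma.ι (fun i : ULift.{v} ℕ => X i.down) ⟨i⟩

noncomputable def telescopeShift : telescope X ⟶ telescope X :=
  Sigma.desc fun i => f i.down ≫ telescopeι X (i.down + 1)

@[simp]
lemma ι_telescopeShift (i : ℕ) :
    telescopeι X i ≫ telescopeShift X f =
      f i ≫ telescopeι X (i + 1) :=
  Sigma.ι_desc _ _

variable [Preadditive C]

lemma coproductComparison_homSumShift {K : C} (d : DirectSum (ULift.{v} ℕ) fun i => K ⟶ X i.down) :
    coproductComparison K _ (homSumShift X f K d) =
      coproductComparison K _ d ≫ telescopeShift X f := by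
  induction d using DirectSum.induction_on with
  | zero => simp
  | of i g =>
    obtain ⟨i⟩ := i
    simp [homSumShift_of]
  | add d d' hd hd' => simp [hd, hd', Preadditive.add_comp]

lemma eq_zero_of_comp_one_sub_telescopeShift {K : C} (hK : IsSmallObject K)
    (x : K ⟶ telescope X) (hx : x ≫ (𝟙 _ - telescopeShift X f) = 0) : x = 0 := by
  obtain ⟨d, rfl⟩ := (hK _).2 x
  rw [Preadditive.comp_sub, comp_id, sub_eq_zero, ← coproductComparison_homSumShift] at hx
  have hd : homSumShift X f K d = d := (hK _).1 hx.symm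
  have hd_apply (j : ℕ) : d ⟨j⟩ = 0 := by
    induction j with
    | zero => rw [← hd, homSumShift_apply_zero]
    | succ j ih => rw [← hd, homSumShift_apply_succ, ih, zero_comp]
  rw [show d = 0 from DFinsupp.ext fun ⟨j⟩ => hd_apply j, map_zero]

lemma exists_sub_comp_telescopeι_eq (K : C)
    (d : DirectSum (ULift.{v} ℕ) fun i => K ⟶ X i.down) :
    ∃ M, ∀ N ≥ M, ∃ (t : K ⟶ X N) (y : K ⟶ telescope X),
      coproductComparison K _ d - t ≫ telescopeι X N = y ≫ (𝟙 _ - telescopeShift X f) := by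
  induction d using DirectSum.induction_on with
  | zero => exact ⟨0, fun N _ => ⟨0, 0, by simp⟩⟩
  | of i g =>
    obtain ⟨i⟩ := i
    refine ⟨i, fun N hN => ?_⟩
    induction N, hN using Nat.le_induction with
    | base => exact ⟨g, 0, by simp⟩
    | succ N _ ih =>
      obtain ⟨t, y, hy⟩ := ih
      refine ⟨t ≫ f N, y + t ≫ telescopeι X N, ?_⟩
      rw [Preadditive.add_comp, ← hy]
      simp [Preadditive.comp_sub]
  | add d d' hd hd' =>
    obtain ⟨M, hM⟩ := hd
    obtain ⟨M', hM'⟩ := hd'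
    refine ⟨max M M', fun N hN => ?_⟩
    obtain ⟨t, y, hy⟩ := hM N (le_of_max_le_left hN)
    obtain ⟨t', y', hy'⟩ := hM' N (le_of_max_le_right hN)
    refine ⟨t + t', y + y', ?_⟩
    rw [map_add, Preadditive.add_comp, Preadditive.add_comp, ← hy, ← hy']
    abel

lemma one_sub_telescopeShift_comp_desc {Z : C} (p : ∀ i, X i ⟶ Z)
    (hp : ∀ i, f i ≫ p (i + 1) = p i) :
    (𝟙 _ - telescopeShift X f) ≫ Sigma.desc (fun i : ULift.{v} ℕ => p i.down) = 0 := by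
  ext ⟨i⟩
  rw [← assoc, Preadditive.comp_sub, comp_id, ι_telescopeShift]
  simp [hp]

lemma exists_eq_comp_one_sub_telescopeShift {K Z : C} (hK : IsSmallObject K) (p : ∀ i, X i ⟶ Z)
    (hp : ∀ i, f i ≫ p (i + 1) = p i)
    (hkill : ∀ i (g : K ⟶ X i), g ≫ p i = 0 → g ≫ f i = 0)
    (x : K ⟶ telescope X) (hx : x ≫ Sigma.desc (fun i : ULift.{v} ℕ => p i.down) = 0) :
    ∃ y, y ≫ (𝟙 _ - telescopeShift X f) = x := by
  obtain ⟨d, rfl⟩ := (hK _).2 x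
  obtain ⟨M, hM⟩ := exists_sub_comp_telescopeι_eq X f K d
  obtain ⟨t, y, hy⟩ := hM M le_rfl
  have ht : t ≫ p M = 0 := by
    have h := congrArg (· ≫ Sigma.desc fun i : ULift.{v} ℕ => p i.down) hy
    simp only [Preadditive.sub_comp, assoc, one_sub_telescopeShift_comp_desc X f p hp, hx,
      comp_zero, zero_sub, neg_eq_zero] at h
    simpa using h
  refine ⟨y + t ≫ telescopeι X M, ?_⟩
  rw [Preadditive.add_comp, ← hy]
  simp [Preadditive.comp_sub, reassoc_of% (hkill M t ht)]

end Telescope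

section Pretriangulated

variable [HasZeroObject C] [HasShift C ℤ] [Preadditive C] [∀ n : ℤ, (shiftFunctor C n).Additive]
  [Pretriangulated C] [HasCoproducts.{v} C]

section CellularTower

variable (G : C)

structure KillingCone {Z X : C} (f : Z ⟶ X) where
  ι : Type v
  deg : ι → ℤ
  cone : C
  w : (∐ fun i => G⟦deg i⟧) ⟶ Z
  e : Z ⟶ cone
  δ : cone ⟶ (∐ fun i => G⟦deg i⟧)⟦(1 : ℤ)⟧
  distinguished : Triangle.mk w e δ ∈ distTriang C
  lift : cone ⟶ X
  e_lift : e ≫ lift = f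
  kill (m : ℤ) (g : G⟦m⟧ ⟶ Z) : g ≫ f = 0 → g ≫ e = 0

lemma KillingCone.nonempty {Z X : C} (f : Z ⟶ X) : Nonempty (KillingCone G f) := by
  let ι := Σ m : ℤ, {g : G⟦m⟧ ⟶ Z // g ≫ f = 0}
  let w : (∐ fun p : ι => G⟦p.1⟧) ⟶ Z := Sigma.desc fun p => p.2.1
  obtain ⟨Z', e, δ, hT⟩ := distinguished_cocone_triangle w
  have hwf : w ≫ f = 0 := by ext ⟨m, g, hg⟩; simpa [w] using hg
  obtain ⟨lift, hlift⟩ := Triangle.yoneda_exact₂ _ hT f hwf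
  have hwe : w ≫ e = 0 := comp_distTriang_mor_zero₁₂ _ hT
  have kill (m : ℤ) (g : G⟦m⟧ ⟶ Z) (hg : g ≫ f = 0) : g ≫ e = 0 := by
    have : g = Sigma.ι _ ⟨m, g, hg⟩ ≫ w := by simp [w]
    rw [this, assoc, hwe, comp_zero]
  exact ⟨⟨ι, fun p => p.1, Z', w, e, δ, hT, lift, hlift.symm, kill⟩⟩

noncomputable def killingCone {Z X : C} (f : Z ⟶ X) : KillingCone G f :=
  Classical.choice (KillingCone.nonempty G f)

noncomputable def cellularTower (X : C) : ℕ → Σ Z : C, Z ⟶ X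
  | 0 => ⟨∐ fun p : Σ m : ℤ, G⟦m⟧ ⟶ X => G⟦p.1⟧, Sigma.desc fun p => p.2⟩
  | i + 1 =>
    ⟨(killingCone G (cellularTower X i).2).cone, (killingCone G (cellularTower X i).2).lift⟩

variable (X : C)

noncomputable abbrev towerObj (i : ℕ) : C := (cellularTower G X i).1

noncomputable def towerπ (i : ℕ) : towerObj G X i ⟶ X := (cellularTower G X i).2

noncomputable def towerMap (i : ℕ) : towerObj G X i ⟶ towerObj G X (i + 1) :=
  (killingCone G (towerπ G X i)).e

lemma towerMap_comp_towerπ (i : ℕ) : towerMap G X i ≫ towerπ G X (i + 1) = towerπ G X i :=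
  (killingCone G (towerπ G X i)).e_lift

lemma comp_towerMap_eq_zero {i : ℕ} {m : ℤ} (g : G⟦m⟧ ⟶ towerObj G X i)
    (hg : g ≫ towerπ G X i = 0) : g ≫ towerMap G X i = 0 :=
  (killingCone G (towerπ G X i)).kill m g hg

lemma exists_comp_towerπ_zero {m : ℤ} (g : G⟦m⟧ ⟶ X) : ∃ h, h ≫ towerπ G X 0 = g :=
  ⟨Sigma.ι (fun p : Σ m : ℤ, G⟦m⟧ ⟶ X => G⟦p.1⟧) ⟨m, g⟩, Sigma.ι_desc _ _⟩

lemma prop_towerObj (P : ObjectProperty C) [P.IsClosedUnderIsomorphisms] [P.IsStableUnderShift ℤ]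
    [P.IsTriangulatedClosed₃] [∀ ι : Type v, P.IsClosedUnderColimitsOfShape (Discrete ι)]
    (hG : P G) (i : ℕ) : P (towerObj G X i) := by
  have hsum {ι : Type v} (deg : ι → ℤ) : P (∐ fun i => G⟦deg i⟧) :=
    P.prop_colimit _ fun j => P.le_shift (deg j.as) G hG
  induction i with
  | zero => exact hsum _
  | succ i ih =>
    exact P.ext_of_isTriangulatedClosed₃ _ (killingCone G (towerπ G X i)).distinguished
      (hsum _) ih

end CellularTower

lemma isIso_of_telescope_triangle {G : C} (hs : IsSmallObject G) (hg : IsWeakGenerator G)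
    (X : C) {Y : C} {q : telescope (towerObj G X) ⟶ Y} {r : Y ⟶ (telescope (towerObj G X))⟦(1 : ℤ)⟧}
    (hT : Triangle.mk (𝟙 _ - telescopeShift _ (towerMap G X)) q r ∈ distTriang C)
    (φ : Y ⟶ X) (hφ : q ≫ φ = Sigma.desc fun i : ULift.{v} ℕ => towerπ G X i.down) : IsIso φ := by
  have h₁₂ : (𝟙 _ - telescopeShift _ (towerMap G X)) ≫ q = 0 :=
    comp_distTriang_mor_zero₁₂ _ hT
  have h₃₁ : r ≫ (𝟙 _ - telescopeShift _ (towerMap G X))⟦(1 : ℤ)⟧' = 0 :=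
    comp_distTriang_mor_zero₃₁ _ hT
  rw [hg φ]
  intro n
  refine ⟨fun g₁ g₂ h => ?_, fun g => ?_⟩
  · rw [← sub_eq_zero]
    have hφ0 : (g₁ - g₂) ≫ φ = 0 := by simpa [Preadditive.sub_comp, sub_eq_zero] using h
    have hr : (g₁ - g₂) ≫ r = 0 :=
      eq_zero_of_comp_shift_map_eq_zero _ 1
        (fun x hx => eq_zero_of_comp_one_sub_telescopeShift _ _ ((hs.shift n).shift (-1)) x hx) _
        (by rw [assoc, h₃₁, comp_zero])
    obtain ⟨g', hg'⟩ : ∃ g', g₁ - g₂ = g' ≫ q := Triangle.coyoneda_exact₃ _ hT _ hr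
    obtain ⟨y, hy⟩ := exists_eq_comp_one_sub_telescopeShift _ _ (hs.shift n) (towerπ G X)
      (towerMap_comp_towerπ G X) (fun _ g hg => comp_towerMap_eq_zero G X g hg) g'
      (by rw [← hφ, ← assoc, ← hg', hφ0])
    rw [hg', ← hy, assoc, h₁₂, comp_zero]
  · obtain ⟨h, hh⟩ := exists_comp_towerπ_zero G X g
    exact ⟨h ≫ telescopeι _ 0 ≫ q, by simp [hφ, hh]⟩

theorem prop_of_isSmallObject_of_isWeakGenerator (P : ObjectProperty C)
    [P.IsClosedUnderIsomorphisms] [P.IsStableUnderShift ℤ] [P.IsTriangulatedClosed₃]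
    [∀ ι : Type v, P.IsClosedUnderColimitsOfShape (Discrete ι)] {G : C} (hs : IsSmallObject G)
    (hg : IsWeakGenerator G) (hG : P G) (X : C) : P X := by
  obtain ⟨Y, q, r, hT⟩ := distinguished_cocone_triangle (𝟙 _ - telescopeShift _ (towerMap G X))
  have hu := one_sub_telescopeShift_comp_desc _ _ _ (towerMap_comp_towerπ G X)
  obtain ⟨φ, hφ⟩ := Triangle.yoneda_exact₂ _ hT _ hu
  have hPtel : P (telescope (towerObj G X)) :=
    P.prop_colimit _ fun i => prop_towerObj G X P hG i.as.down
  have : IsIso φ := isIso_of_telescope_triangle hs hg X hT φ hφ.symm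
  exact P.prop_of_iso (asIso φ) (P.ext_of_isTriangulatedClosed₃ _ hT hPtel hPtel)

end Pretriangulated

end Paper

theorem statement_0
    -- `T` is a monogenic monoidal triangulated category:
    {C : Type u} [Category.{v} C] [HasZeroObject C] [HasShift C ℤ] [Preadditive C]
    [∀ n : ℤ, (shiftFunctor C n).Additive] [Pretriangulated C] [HasCoproducts.{v} C]
    [MonoidalCategory C] [SymmetricCategory C]
    [∀ X : C, (tensorLeft X).Additive] [∀ X : C, (tensorRight X).Additive]
    [∀ X : C, (tensorLeft X).CommShift ℤ] [∀ X : C, (tensorRight X).CommShift ℤ]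
    [∀ X : C, (tensorLeft X).IsTriangulated] [∀ X : C, (tensorRight X).IsTriangulated]
    (hCtensorL : ∀ (X : C) (ι : Type v), PreservesColimitsOfShape (Discrete ι) (tensorLeft X))
    (hCtensorR : ∀ (X : C) (ι : Type v), PreservesColimitsOfShape (Discrete ι) (tensorRight X))
    (hCunit_small : IsSmallObject (𝟙_ C)) (hCunit_gen : IsWeakGenerator (𝟙_ C))
    -- `T′` is a monogenic monoidal triangulated category:
    {D : Type u} [Category.{v} D] [HasZeroObject D] [HasShift D ℤ] [Preadditive D]
    [∀ n : ℤ, (shiftFunctor D n).Additive] [Pretriangulated D] [HasCoproducts.{v} D]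
    [MonoidalCategory D] [SymmetricCategory D]
    [∀ X : D, (tensorLeft X).Additive] [∀ X : D, (tensorRight X).Additive]
    [∀ X : D, (tensorLeft X).CommShift ℤ] [∀ X : D, (tensorRight X).CommShift ℤ]
    [∀ X : D, (tensorLeft X).IsTriangulated] [∀ X : D, (tensorRight X).IsTriangulated]
    (hDtensorL : ∀ (X : D) (ι : Type v), PreservesColimitsOfShape (Discrete ι) (tensorLeft X))
    (hDtensorR : ∀ (X : D) (ι : Type v), PreservesColimitsOfShape (Discrete ι) (tensorRight X))
    (hDunit_small : IsSmallObject (𝟙_ D)) (hDunit_gen : IsWeakGenerator (𝟙_ D))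
    -- `F` is a triangulated functor preserving arbitrary coproducts:
    (F : C ⥤ D) [F.Additive] [F.CommShift ℤ] [F.IsTriangulated]
    (hF : ∀ ι : Type v, PreservesColimitsOfShape (Discrete ι) F)
    -- the lax monoidal structure on `F`:
    (η : 𝟙_ D ⟶ F.obj (𝟙_ C))
    (φ : ∀ A B : C, F.obj A ⊗ F.obj B ⟶ F.obj (A ⊗ B))
    (hφ_nat : ∀ {A A' B B' : C} (f : A ⟶ A') (g : B ⟶ B'),
      (F.map f ⊗ₘ F.map g) ≫ φ A' B' = φ A B ≫ F.map (f ⊗ₘ g))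
    -- compatibility of `φ` with the shift in the second variable:
    (hφ_shift₂ : ∀ (n : ℤ) (A B : C),
      φ A (B⟦n⟧) ≫ F.map (((tensorLeft A).commShiftIso n).hom.app B) ≫
          (F.commShiftIso n).hom.app (A ⊗ B) =
        (F.obj A ◁ (F.commShiftIso n).hom.app B) ≫
          ((tensorLeft (F.obj A)).commShiftIso n).hom.app (F.obj B) ≫ (φ A B)⟦n⟧')
    -- compatibility of `φ` with the shift in the first variable:
    (hφ_shift₁ : ∀ (n : ℤ) (A B : C),
      φ (A⟦n⟧) B ≫ F.map (((tensorRight B).commShiftIso n).hom.app A) ≫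
          (F.commShiftIso n).hom.app (A ⊗ B) =
        ((F.commShiftIso n).hom.app A ▷ F.obj B) ≫
          ((tensorRight (F.obj B)).commShiftIso n).hom.app (F.obj A) ≫ (φ A B)⟦n⟧')
    -- the coherence diagrams of a lax (symmetric) monoidal functor:
    (hφ_assoc : ∀ A B Z : C,
      (φ A B ⊗ₘ 𝟙 (F.obj Z)) ≫ φ (A ⊗ B) Z ≫ F.map (α_ A B Z).hom =
        (α_ (F.obj A) (F.obj B) (F.obj Z)).hom ≫ (𝟙 (F.obj A) ⊗ₘ φ B Z) ≫ φ A (B ⊗ Z))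
    (hφ_left_unit : ∀ A : C,
      (η ⊗ₘ 𝟙 (F.obj A)) ≫ φ (𝟙_ C) A ≫ F.map (λ_ A).hom = (λ_ (F.obj A)).hom)
    (hφ_right_unit : ∀ A : C,
      (𝟙 (F.obj A) ⊗ₘ η) ≫ φ A (𝟙_ C) ≫ F.map (ρ_ A).hom = (ρ_ (F.obj A)).hom)
    (hφ_braided : ∀ A B : C,
      (β_ (F.obj A) (F.obj B)).hom ≫ φ B A = φ A B ≫ F.map (β_ A B).hom)
    -- the unit map and the structure map on the units are isomorphisms:
    (hη : IsIso η) (hφ_unit : IsIso (φ (𝟙_ C) (𝟙_ C))) :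
    ∀ A B : C, IsIso (φ A B) := by
  intro A B
  have hφ_unit_right : IsIso (φ A (𝟙_ C)) := by
    have h : φ A (𝟙_ C) = inv (F.obj A ◁ η) ≫ (ρ_ (F.obj A)).hom ≫ inv (F.map (ρ_ A).hom) := by
      rw [← hφ_right_unit A]
      simp
    rw [h]
    infer_instance
  let τ : F ⋙ tensorLeft (F.obj A) ⟶ tensorLeft A ⋙ F :=
    { app := φ A, naturality := fun _ _ g => by simpa using hφ_nat (𝟙 A) g }
  have : NatTrans.CommShift τ ℤ := ⟨fun n => by
    ext B
    simpa [τ, Functor.commShiftIso_comp_hom_app] using (hφ_shift₂ n A B).symm⟩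
  exact prop_of_isSmallObject_of_isWeakGenerator (isoLocus τ) hCunit_small hCunit_gen
    hφ_unit_right B
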